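/- arXiv:1805.03347 — 6 statements merged into one kernel-verified Lean document; each statement's English description precedes it below -/
import Mathlib

section
/- If a function A : ℝ>0 × ℝ>0 → ℝ>0 satisfies (1) symmetry: A(x,y) = A(y,x) for all x,y > 0; (2) scaling: A(λx, λy) = λ·A(x,y) for all λ, x, y > 0; and (3) reciprocity: A(1/x, 1/y) = 1/A(x,y) for all x,y > 0, then A(x,y) = √(xy) for all x,y > 0. -/
/-! Scaling reduces `A` to the one-variable function `t ↦ A 1 t`, since `A x y = x * A 1 (y / x)`.
Symmetry, scaling and reciprocity then give `A 1 t = A t 1 = t * A 1 t⁻¹ = t / A 1 t`, so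
`A 1 t ^ 2 = t`, and positivity selects the root `√t`. -/

namespace GeometricMeanAggregator

variable {A : ℝ → ℝ → ℝ}

lemma apply_eq_mul_apply_one_div
    (hscale : ∀ l x y : ℝ, 0 < l → 0 < x → 0 < y → A (l * x) (l * y) = l * A x y)
    {x y : ℝ} (hx : 0 < x) (hy : 0 < y) : A x y = x * A 1 (y / x) := by
  simpa [mul_div_cancel₀ y hx.ne'] using hscale x 1 (y / x) hx one_pos (div_pos hy hx)

lemma apply_one_sq
    (hsymm : ∀ x y : ℝ, 0 < x → 0 < y → A x y = A y x)
    (hscale : ∀ l x y : ℝ, 0 < l → 0 < x → 0 < y → A (l * x) (l * y) = l * A x y)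
    (hrecip : ∀ x y : ℝ, 0 < x → 0 < y → A x⁻¹ y⁻¹ = (A x y)⁻¹)
    {t : ℝ} (ht : 0 < t) (hA : A 1 t ≠ 0) : A 1 t ^ 2 = t := by
  have : A 1 t = t * (A 1 t)⁻¹ :=
    calc A 1 t = A t 1 := hsymm 1 t one_pos ht
      _ = t * A 1 t⁻¹ := by rw [apply_eq_mul_apply_one_div hscale ht one_pos, one_div]
      _ = t * (A 1 t)⁻¹ := by rw [← hrecip 1 t one_pos ht, inv_one]
  field_simp at this
  exact this

lemma apply_one_eq_sqrt
    (hpos : ∀ x y : ℝ, 0 < x → 0 < y → 0 < A x y)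
    (hsymm : ∀ x y : ℝ, 0 < x → 0 < y → A x y = A y x)
    (hscale : ∀ l x y : ℝ, 0 < l → 0 < x → 0 < y → A (l * x) (l * y) = l * A x y)
    (hrecip : ∀ x y : ℝ, 0 < x → 0 < y → A x⁻¹ y⁻¹ = (A x y)⁻¹)
    {t : ℝ} (ht : 0 < t) : A 1 t = √t := by
  have hA := hpos 1 t one_pos ht
  rw [← Real.sqrt_sq hA.le, apply_one_sq hsymm hscale hrecip ht hA.ne']

end GeometricMeanAggregator

open GeometricMeanAggregator in
theorem siegel_two_rates_geometric_mean
    (A : ℝ → ℝ → ℝ)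
    (hpos : ∀ x y : ℝ, 0 < x → 0 < y → 0 < A x y)
    (hsymm : ∀ x y : ℝ, 0 < x → 0 < y → A x y = A y x)
    (hscale : ∀ l x y : ℝ, 0 < l → 0 < x → 0 < y → A (l * x) (l * y) = l * A x y)
    (hrecip : ∀ x y : ℝ, 0 < x → 0 < y → A x⁻¹ y⁻¹ = (A x y)⁻¹) :
    ∀ x y : ℝ, 0 < x → 0 < y → A x y = Real.sqrt (x * y) := by
  intro x y hx hy
  calc A x y = x * √(y / x) := by
        rw [apply_eq_mul_apply_one_div hscale hx hy,
          apply_one_eq_sqrt hpos hsymm hscale hrecip (div_pos hy hx)]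
    _ = √(x ^ 2 * (y / x)) := by rw [Real.sqrt_mul (sq_nonneg x), Real.sqrt_sq hx.le]
    _ = √(x * y) := by congr 1; field_simp
end

section
/- For every n ≥ 3, there exist infinitely many functions A : (ℝ>0)ⁿ → ℝ>0 satisfying the symmetry, scaling, and reciprocity axioms. -/
/-- The positive real numbers, as a subtype of `ℝ`. -/
abbrev PosReal : Type := {x : ℝ // 0 < x}

/-- The aggregator axioms for `A : (ℝ>0)ⁿ → ℝ>0`:
symmetry (A1), scaling (A2), and reciprocity (A3). -/
def IsAggregator {n : ℕ} (A : (Fin n → PosReal) → PosReal) : Prop :=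
  (∀ (e : Fin n → PosReal) (σ : Equiv.Perm (Fin n)), A (e ∘ σ) = A e) ∧
    (∀ (e : Fin n → PosReal) (l : PosReal), A (fun i => l * e i) = l * A e) ∧
    (∀ e : Fin n → PosReal, A (fun i => (e i)⁻¹) = (A e)⁻¹)

/-!
If `A` and `B` are aggregators, so is every geometric extrapolation `B · (A / B) ^ k`, and these
are pairwise distinct as soon as `A ≠ B`. So it suffices to exhibit two different aggregators.
For `k ≥ 1` the ratio `∑ eᵢᵏ / ∑ eᵢ⁻ᵏ` is symmetric, scales with `λ ^ (2k)` and is inverted by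
`e ↦ e⁻¹`, so its `2k`-th root is an aggregator. For `n = 2` all these roots equal `√(e₁ e₂)`,
but for `n ≥ 3` the roots for `k = 1, 2` already differ at `(2, 1, …, 1)`.
-/

noncomputable section

variable {n : ℕ}

def geomExtrapolation (A B : (Fin n → PosReal) → PosReal) (k : ℕ) (e : Fin n → PosReal) : PosReal :=
  B e * (A e / B e) ^ k

variable {A B : (Fin n → PosReal) → PosReal}

namespace IsAggregator

theorem geomExtrapolation (hA : IsAggregator A) (hB : IsAggregator B) (k : ℕ) :
    IsAggregator (geomExtrapolation A B k) := by
  obtain ⟨hA₁, hA₂, hA₃⟩ := hA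
  obtain ⟨hB₁, hB₂, hB₃⟩ := hB
  refine ⟨fun e σ => ?_, fun e l => ?_, fun e => ?_⟩
  · simp only [_root_.geomExtrapolation, hA₁, hB₁]
  · simp only [_root_.geomExtrapolation, hA₂, hB₂, mul_div_mul_left_eq_div, mul_assoc]
  · simp only [_root_.geomExtrapolation, hA₃, hB₃]
    rw [mul_inv, ← inv_pow, inv_div, inv_div_inv]

end IsAggregator

theorem geomExtrapolation_injective (h : A ≠ B) :
    Function.Injective (geomExtrapolation A B) := by
  obtain ⟨e, he⟩ := Function.ne_iff.mp h
  have : Function.Injective fun k : ℕ => (A e / B e) ^ k :=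
    injective_pow_iff_not_isOfFinOrder.mpr
      (not_isOfFinOrder_of_isMulTorsionFree (div_ne_one.mpr he))
  exact fun k m hkm => this (mul_left_cancel (congrFun hkm e))

theorem infinite_setOf_isAggregator_of_ne (hA : IsAggregator A) (hB : IsAggregator B)
    (h : A ≠ B) :
    {A : (Fin n → PosReal) → PosReal | IsAggregator A}.Infinite :=
  Set.infinite_of_injective_forall_mem (geomExtrapolation_injective h) (hA.geomExtrapolation hB)

def powerSumRatio (k : ℕ) (e : Fin n → PosReal) : ℝ :=
  (∑ i, (e i : ℝ) ^ k) / ∑ i, ((e i : ℝ) ^ k)⁻¹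

theorem powerSumRatio_pos [NeZero n] (k : ℕ) (e : Fin n → PosReal) : 0 < powerSumRatio k e := by
  have hpow (i : Fin n) : 0 < (e i : ℝ) ^ k := pow_pos (e i).2 k
  exact div_pos (Finset.sum_pos (fun i _ => hpow i) Finset.univ_nonempty)
    (Finset.sum_pos (fun i _ => inv_pos.mpr (hpow i)) Finset.univ_nonempty)

theorem powerSumRatio_comp_perm (k : ℕ) (e : Fin n → PosReal) (σ : Equiv.Perm (Fin n)) :
    powerSumRatio k (e ∘ σ) = powerSumRatio k e := by
  simp only [powerSumRatio, Function.comp_apply, Equiv.sum_comp σ fun i => (e i : ℝ) ^ k,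
    Equiv.sum_comp σ fun i => ((e i : ℝ) ^ k)⁻¹]

theorem powerSumRatio_const_mul (k : ℕ) (e : Fin n → PosReal) (l : PosReal) :
    powerSumRatio k (fun i => l * e i) = (l : ℝ) ^ (2 * k) * powerSumRatio k e := by
  have hl : (l : ℝ) ^ k ≠ 0 := pow_ne_zero k l.2.ne'
  simp only [powerSumRatio, Positive.val_mul, mul_pow, mul_inv, ← Finset.mul_sum]
  field_simp
  ring

theorem powerSumRatio_inv (k : ℕ) (e : Fin n → PosReal) :
    powerSumRatio k (fun i => (e i)⁻¹) = (powerSumRatio k e)⁻¹ := by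
  simp only [powerSumRatio, Positive.coe_inv, inv_pow, inv_inv, inv_div]

def powerRatioMean [NeZero n] (k : ℕ) (e : Fin n → PosReal) : PosReal :=
  ⟨powerSumRatio k e ^ ((2 * k : ℕ) : ℝ)⁻¹, Real.rpow_pos_of_pos (powerSumRatio_pos k e) _⟩

theorem powerRatioMean_pow [NeZero n] {k : ℕ} (hk : k ≠ 0) (e : Fin n → PosReal) :
    (powerRatioMean k e : ℝ) ^ (2 * k) = powerSumRatio k e :=
  Real.rpow_inv_natCast_pow (powerSumRatio_pos k e).le (by omega)

theorem isAggregator_powerRatioMean [NeZero n] {k : ℕ} (hk : k ≠ 0) :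
    IsAggregator (powerRatioMean (n := n) k) := by
  refine ⟨fun e σ => ?_, fun e l => ?_, fun e => ?_⟩
  · simp only [powerRatioMean, powerSumRatio_comp_perm]
  · apply Subtype.ext
    simp only [powerRatioMean, powerSumRatio_const_mul, Positive.val_mul]
    rw [Real.mul_rpow (pow_nonneg l.2.le _) (powerSumRatio_pos k e).le,
      Real.pow_rpow_inv_natCast l.2.le (by omega)]
  · apply Subtype.ext
    simp only [powerRatioMean, powerSumRatio_inv, Positive.coe_inv]
    exact Real.inv_rpow (powerSumRatio_pos k e).le _

theorem powerSumRatio_mulSingle [NeZero n] (k : ℕ) (a : PosReal) :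
    powerSumRatio k (Pi.mulSingle (0 : Fin n) a) =
      ((a : ℝ) ^ k + (n - 1)) / (((a : ℝ) ^ k)⁻¹ + (n - 1)) := by
  have hsum (f : ℝ → ℝ) :
      ∑ i, f ((Pi.mulSingle 0 a : Fin n → PosReal) i) = f a + (n - 1) * f 1 := by
    rw [Fintype.sum_eq_add_sum_compl 0, Finset.sum_congr rfl fun i hi => by
      rw [Pi.mulSingle_eq_of_ne (by simpa using hi)]]
    simp [Finset.card_compl, Nat.cast_sub NeZero.one_le]
  rw [powerSumRatio, hsum (· ^ k), hsum (fun x => (x ^ k)⁻¹)]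
  simp

theorem powerSumRatio_one_sq_lt_two [NeZero n] (hn : 3 ≤ n) :
    powerSumRatio 1 (Pi.mulSingle (0 : Fin n) ⟨2, two_pos⟩) ^ 2 <
      powerSumRatio 2 (Pi.mulSingle (0 : Fin n) ⟨2, two_pos⟩) := by
  have hn' : (3 : ℝ) ≤ n := by exact_mod_cast hn
  rw [powerSumRatio_mulSingle, powerSumRatio_mulSingle, div_pow,
    div_lt_div_iff₀ (pow_pos (by norm_num; linarith) 2) (by norm_num; linarith)]
  norm_num
  -- cross-multiplied, the right side exceeds the left by `3 (n - 1) (n - 2) / 4`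
  nlinarith [mul_nonneg (sub_nonneg.mpr hn') (sub_nonneg.mpr hn')]

theorem powerRatioMean_one_ne_two [NeZero n] (hn : 3 ≤ n) :
    powerRatioMean (n := n) 1 ≠ powerRatioMean 2 := by
  intro h
  set e₀ : Fin n → PosReal := Pi.mulSingle 0 ⟨2, two_pos⟩
  have h4 : (powerRatioMean 1 e₀ : ℝ) ^ (2 * 1 * 2) = (powerRatioMean 2 e₀ : ℝ) ^ (2 * 2) := by
    rw [h]
  rw [pow_mul, powerRatioMean_pow one_ne_zero, powerRatioMean_pow two_ne_zero] at h4
  exact (powerSumRatio_one_sq_lt_two hn).ne h4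

end

theorem infinitely_many_aggregators {n : ℕ} (hn : 3 ≤ n) :
    {A : (Fin n → PosReal) → PosReal | IsAggregator A}.Infinite := by
  have : NeZero n := ⟨by omega⟩
  exact infinite_setOf_isAggregator_of_ne (isAggregator_powerRatioMean one_ne_zero)
    (isAggregator_powerRatioMean two_ne_zero) (powerRatioMean_one_ne_two hn)
end

section
/- Let β : (ℝ≥1)^(n-1) → ℝ>0 satisfy β(u₁,…,u_{n-1})·β(u_{n-1},…,u₁) = 1 for all u₁,…,u_{n-1} ≥ 1. Then the function A(e₁,…,eₙ) = (e₁⋯eₙ)^(1/n) · β(e^(n)/e^(n-1), …, e^(2)/e^(1)), where e^(1) ≤ … ≤ e^(n) are the order statistics of e₁,…,eₙ, satisfies the symmetry, scaling, and reciprocity axioms for aggregators. -/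
/-!
Permuting the entries does not change the product nor the order statistics. Multiplying by
`l > 0` is increasing, so it commutes with sorting; the ratios are unchanged and the geometric
mean picks up the factor `l`. Inversion is decreasing on positive reals, so it sorts the tuple in
reverse order; this reverses the tuple of ratios, and the reciprocity of `β` applies because all
ratios of order statistics are at least `1`.
-/

/-- The order statistics of a tuple of reals: the tuple rearranged increasingly. -/
noncomputable def osort {n : ℕ} (e : Fin n → ℝ) : Fin n → ℝ :=
  e ∘ Tuple.sort e

/-- The tuple of consecutive ratios of order statistics,
`(e⁽ⁿ⁾/e⁽ⁿ⁻¹⁾, …, e⁽²⁾/e⁽¹⁾)`. -/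
noncomputable def ratios {n : ℕ} (e : Fin n → ℝ) : Fin (n - 1) → ℝ :=
  fun k => osort e ⟨n - 1 - (k : ℕ), by have := k.isLt; omega⟩ /
    osort e ⟨n - 2 - (k : ℕ), by have := k.isLt; omega⟩

section OrderStatistics

variable {n : ℕ}

lemma monotone_osort (e : Fin n → ℝ) : Monotone (osort e) :=
  Tuple.monotone_sort e

lemma osort_comp_perm (e : Fin n → ℝ) (σ : Equiv.Perm (Fin n)) :
    osort (e ∘ σ) = osort e :=
  Tuple.comp_perm_comp_sort_eq_comp_sort

lemma osort_comp_of_monotoneOn {e : Fin n → ℝ} {f : ℝ → ℝ} (hf : MonotoneOn f (Set.range e)) :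
    osort (f ∘ e) = f ∘ osort e :=
  (Tuple.comp_sort_eq_comp_iff_monotone.2 fun _ _ hab =>
    hf (Set.mem_range_self _) (Set.mem_range_self _) (monotone_osort e hab)).symm

lemma osort_comp_of_antitoneOn {e : Fin n → ℝ} {f : ℝ → ℝ} (hf : AntitoneOn f (Set.range e)) :
    osort (f ∘ e) = f ∘ osort e ∘ Fin.rev :=
  (Tuple.comp_sort_eq_comp_iff_monotone (σ := Fin.revPerm.trans (Tuple.sort e)).2 fun _ _ hab =>
    hf (Set.mem_range_self _) (Set.mem_range_self _)
      (monotone_osort e (Fin.rev_le_rev.2 hab))).symm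

lemma ratios_comp_perm (e : Fin n → ℝ) (σ : Equiv.Perm (Fin n)) :
    ratios (e ∘ σ) = ratios e := by
  unfold ratios
  rw [osort_comp_perm]

lemma ratios_const_mul {e : Fin n → ℝ} {l : ℝ} (hl : 0 < l) :
    ratios (fun i => l * e i) = ratios e := by
  have hmono : MonotoneOn (l * ·) (Set.range e) := fun _ _ _ _ h =>
    mul_le_mul_of_nonneg_left h hl.le
  funext k
  simp only [ratios, ← Function.comp_def (l * ·) e, osort_comp_of_monotoneOn hmono,
    Function.comp_apply, mul_div_mul_left _ _ hl.ne']

lemma ratios_inv {e : Fin n → ℝ} (he : ∀ i, 0 < e i) :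
    ratios (fun i => (e i)⁻¹) = ratios e ∘ Fin.rev := by
  have hanti : AntitoneOn (·⁻¹) (Set.range e) := by
    rintro _ ⟨i, rfl⟩ _ ⟨j, rfl⟩ h
    exact inv_anti₀ (he i) h
  funext k
  have hk := k.isLt
  simp only [ratios, ← Function.comp_def (·⁻¹) e, osort_comp_of_antitoneOn hanti,
    Function.comp_apply, inv_div_inv]
  congr 2 <;> ext <;> simp only [Fin.val_rev] <;> omega

lemma one_le_ratios {e : Fin n → ℝ} (he : ∀ i, 0 < e i) (k : Fin (n - 1)) :
    1 ≤ ratios e k :=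
  (one_le_div₀ (he (Tuple.sort e _))).2 <|
    monotone_osort e (by simp only [Fin.mk_le_mk]; omega)

end OrderStatistics

lemma prod_const_mul_rpow_inv {n : ℕ} (hn : n ≠ 0) {e : Fin n → ℝ} (he : ∀ i, 0 ≤ e i)
    {l : ℝ} (hl : 0 ≤ l) :
    (∏ i, l * e i) ^ (n : ℝ)⁻¹ = l * (∏ i, e i) ^ (n : ℝ)⁻¹ := by
  rw [Finset.prod_mul_distrib, Finset.prod_const, Finset.card_fin,
    Real.mul_rpow (by positivity) (Finset.prod_nonneg fun i _ => he i),
    Real.pow_rpow_inv_natCast hl hn]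

theorem aggregator_from_reciprocity_function {n : ℕ} (hn : 0 < n)
    (β : (Fin (n - 1) → ℝ) → ℝ)
    (hβrec : ∀ u : Fin (n - 1) → ℝ, (∀ i, 1 ≤ u i) →
      β u * β (u ∘ Fin.rev) = 1)
    (A : (Fin n → ℝ) → ℝ)
    (hA : ∀ e : Fin n → ℝ, (∀ i, 0 < e i) →
      A e = (∏ i, e i) ^ ((n : ℝ)⁻¹) * β (ratios e)) :
    (∀ e : Fin n → ℝ, (∀ i, 0 < e i) →
      ∀ σ : Equiv.Perm (Fin n), A (e ∘ σ) = A e) ∧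
    (∀ e : Fin n → ℝ, (∀ i, 0 < e i) →
      ∀ l : ℝ, 0 < l → A (fun i => l * e i) = l * A e) ∧
    (∀ e : Fin n → ℝ, (∀ i, 0 < e i) →
      A (fun i => (e i)⁻¹) = (A e)⁻¹) := by
  refine ⟨fun e he σ => ?_, fun e he l hl => ?_, fun e he => ?_⟩
  · rw [hA (e ∘ σ) fun i => he (σ i), hA e he, ratios_comp_perm,
      Function.comp_def, Equiv.prod_comp σ e]
  · rw [hA _ fun i => mul_pos hl (he i), hA e he, ratios_const_mul hl,
      prod_const_mul_rpow_inv hn.ne' (fun i => (he i).le) hl.le, mul_assoc]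
  · have hβ : β (ratios e ∘ Fin.rev) = (β (ratios e))⁻¹ :=
      (inv_eq_of_mul_eq_one_right (hβrec _ (one_le_ratios he))).symm
    rw [hA _ fun i => inv_pos.2 (he i), hA e he, ratios_inv he, hβ, Finset.prod_inv_distrib,
      Real.inv_rpow (Finset.prod_nonneg fun i _ => (he i).le), mul_inv]
end

section
/- Every function A : (ℝ>0)ⁿ → ℝ>0 satisfying the symmetry, scaling, and reciprocity axioms has the form A(e₁,…,eₙ) = (e₁⋯eₙ)^(1/n) · β(e^(n)/e^(n-1), …, e^(2)/e^(1)) for some reciprocity function β : (ℝ≥1)^(n-1) → ℝ>0, where e^(1) ≤ … ≤ e^(n) denote the order statistics of the inputs. -/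
open Finset

/-- `ratios e` is `consecRatios (osort e)` by definition. -/
noncomputable def consecRatios {n : ℕ} (s : Fin n → ℝ) : Fin (n - 1) → ℝ :=
  fun k => s ⟨n - 1 - (k : ℕ), by have := k.isLt; omega⟩ /
    s ⟨n - 2 - (k : ℕ), by have := k.isLt; omega⟩

section consecRatios

variable {n : ℕ}

theorem consecRatios_rev_apply (s : Fin n → ℝ) (k : Fin (n - 1)) :
    consecRatios s k.rev = s ⟨k + 1, by omega⟩ / s ⟨k, by omega⟩ := by
  simp only [consecRatios, Fin.val_rev]
  congr 3 <;> omega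

theorem consecRatios_pos {s : Fin n → ℝ} (hs : ∀ i, 0 < s i) (k : Fin (n - 1)) :
    0 < consecRatios s k :=
  div_pos (hs _) (hs _)

theorem consecRatios_inv_rev (s : Fin n → ℝ) :
    consecRatios (fun j => (s j.rev)⁻¹) = consecRatios s ∘ Fin.rev := by
  funext k
  rw [Function.comp_apply, consecRatios_rev_apply, consecRatios, inv_div_inv]
  congr 2 <;> ext <;> simp only [Fin.val_rev] <;> omega

/-- The tuple starting at `1` whose consecutive ratios are `u`; the `else` branch is never taken
for `j < n`. -/
noncomputable def ofConsecRatios (u : Fin (n - 1) → ℝ) : Fin n → ℝ :=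
  fun j => ∏ m ∈ range j, if h : m < n - 1 then u (Fin.rev ⟨m, h⟩) else 1

theorem ofConsecRatios_succ (u : Fin (n - 1) → ℝ) (k : Fin (n - 1)) :
    ofConsecRatios u ⟨k + 1, by omega⟩ = ofConsecRatios u ⟨k, by omega⟩ * u k.rev := by
  simp only [ofConsecRatios, prod_range_succ, dif_pos k.isLt]

theorem ofConsecRatios_pos {u : Fin (n - 1) → ℝ} (hu : ∀ i, 0 < u i) (j : Fin n) :
    0 < ofConsecRatios u j :=
  prod_pos fun m _ => by split <;> simp [hu]

theorem consecRatios_ofConsecRatios {u : Fin (n - 1) → ℝ} (hu : ∀ i, 0 < u i) :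
    consecRatios (ofConsecRatios u) = u := by
  funext k
  rw [← Fin.rev_rev k, consecRatios_rev_apply, ofConsecRatios_succ,
    mul_div_cancel_left₀ _ (ofConsecRatios_pos hu _).ne']

theorem exists_const_mul_of_consecRatios_eq {s t : Fin n → ℝ} (hs : ∀ i, 0 < s i)
    (ht : ∀ i, 0 < t i) (h : consecRatios s = consecRatios t) :
    ∃ c, 0 < c ∧ t = fun j => c * s j := by
  rcases n with _ | m
  · exact ⟨1, one_pos, funext fun i => i.elim0⟩
  refine ⟨t 0 / s 0, div_pos (ht 0) (hs 0), funext fun ⟨j, hj⟩ => ?_⟩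
  induction j with
  | zero => exact (div_mul_cancel₀ _ (hs 0).ne').symm
  | succ j ih =>
    have hk : j < m + 1 - 1 := by omega
    have hstep := congrFun h (Fin.rev ⟨j, hk⟩)
    rw [consecRatios_rev_apply, consecRatios_rev_apply, ih (by omega),
      eq_div_iff (mul_pos (div_pos (ht 0) (hs 0)) (hs _)).ne'] at hstep
    rw [← hstep]
    field_simp [(hs ⟨j, by omega⟩).ne']

end consecRatios

section divGeomMean

variable {n : ℕ} (A : (Fin n → ℝ) → ℝ)

noncomputable def divGeomMean (e : Fin n → ℝ) : ℝ :=
  A e / (∏ i, e i) ^ (n : ℝ)⁻¹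

variable {A} {e : Fin n → ℝ}

theorem divGeomMean_pos (hpos : ∀ e : Fin n → ℝ, (∀ i, 0 < e i) → 0 < A e)
    (he : ∀ i, 0 < e i) : 0 < divGeomMean A e :=
  div_pos (hpos e he) (by have := prod_pos fun i (_ : i ∈ univ) => he i; positivity)

theorem divGeomMean_comp_perm
    (hsymm : ∀ e : Fin n → ℝ, (∀ i, 0 < e i) →
      ∀ σ : Equiv.Perm (Fin n), A (e ∘ σ) = A e)
    (he : ∀ i, 0 < e i) (σ : Equiv.Perm (Fin n)) :
    divGeomMean A (e ∘ σ) = divGeomMean A e := by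
  rw [divGeomMean, divGeomMean, hsymm e he σ, Function.comp_def, Equiv.prod_comp σ e]

theorem divGeomMean_const_mul (hn : n ≠ 0)
    (hscale : ∀ e : Fin n → ℝ, (∀ i, 0 < e i) →
      ∀ l : ℝ, 0 < l → A (fun i => l * e i) = l * A e)
    (he : ∀ i, 0 < e i) {c : ℝ} (hc : 0 < c) :
    divGeomMean A (fun i => c * e i) = divGeomMean A e := by
  have hP : 0 < ∏ i, e i := prod_pos fun i _ => he i
  have hroot : (c ^ n) ^ (n : ℝ)⁻¹ = c := Real.pow_rpow_inv_natCast hc.le hn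
  rw [divGeomMean, divGeomMean, hscale e he c hc, prod_mul_distrib, prod_const, card_univ,
    Fintype.card_fin, Real.mul_rpow (by positivity) hP.le, hroot, mul_div_mul_left _ _ hc.ne']

theorem divGeomMean_inv
    (hrecip : ∀ e : Fin n → ℝ, (∀ i, 0 < e i) → A (fun i => (e i)⁻¹) = (A e)⁻¹)
    (he : ∀ i, 0 < e i) : divGeomMean A (fun i => (e i)⁻¹) = (divGeomMean A e)⁻¹ := by
  rw [divGeomMean, divGeomMean, hrecip e he, prod_inv_distrib,
    Real.inv_rpow (prod_pos fun i _ => he i).le, inv_div_inv, inv_div]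

theorem divGeomMean_eq_of_consecRatios_eq (hn : n ≠ 0)
    (hscale : ∀ e : Fin n → ℝ, (∀ i, 0 < e i) →
      ∀ l : ℝ, 0 < l → A (fun i => l * e i) = l * A e)
    {s t : Fin n → ℝ} (hs : ∀ i, 0 < s i) (ht : ∀ i, 0 < t i)
    (h : consecRatios s = consecRatios t) : divGeomMean A t = divGeomMean A s := by
  obtain ⟨c, hc, rfl⟩ := exists_const_mul_of_consecRatios_eq hs ht h
  exact divGeomMean_const_mul hn hscale hs hc

end divGeomMean

section aggregator

variable {n : ℕ} {A : (Fin n → ℝ) → ℝ}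

theorem ne_zero_of_homogeneous (hpos : ∀ e : Fin n → ℝ, (∀ i, 0 < e i) → 0 < A e)
    (hscale : ∀ e : Fin n → ℝ, (∀ i, 0 < e i) →
      ∀ l : ℝ, 0 < l → A (fun i => l * e i) = l * A e) :
    n ≠ 0 := by
  rintro rfl
  have h1 : ∀ i : Fin 0, 0 < (1 : Fin 0 → ℝ) i := fun i => i.elim0
  have h2 := hscale 1 h1 2 two_pos
  rw [Subsingleton.elim (fun i => 2 * (1 : Fin 0 → ℝ) i) 1] at h2
  linarith [hpos 1 h1]

variable (hn : n ≠ 0)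
    (hsymm : ∀ e : Fin n → ℝ, (∀ i, 0 < e i) →
      ∀ σ : Equiv.Perm (Fin n), A (e ∘ σ) = A e)
    (hscale : ∀ e : Fin n → ℝ, (∀ i, 0 < e i) →
      ∀ l : ℝ, 0 < l → A (fun i => l * e i) = l * A e)
include hn hsymm hscale

theorem divGeomMean_ofConsecRatios_ratios {e : Fin n → ℝ} (he : ∀ i, 0 < e i) :
    divGeomMean A (ofConsecRatios (ratios e)) = divGeomMean A e := by
  have hsort : ∀ i, 0 < osort e i := fun i => he _
  have hratios : ∀ i, 0 < ratios e i := consecRatios_pos hsort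
  rw [divGeomMean_eq_of_consecRatios_eq hn hscale hsort (ofConsecRatios_pos hratios)
    (consecRatios_ofConsecRatios hratios).symm, osort, divGeomMean_comp_perm hsymm he]

/-- Reversing the ratios amounts to `e ↦ (e⁻¹ ∘ rev)`, up to a scalar. -/
theorem divGeomMean_ofConsecRatios_comp_rev
    (hrecip : ∀ e : Fin n → ℝ, (∀ i, 0 < e i) → A (fun i => (e i)⁻¹) = (A e)⁻¹)
    {u : Fin (n - 1) → ℝ} (hu : ∀ i, 0 < u i) :
    divGeomMean A (ofConsecRatios (u ∘ Fin.rev)) = (divGeomMean A (ofConsecRatios u))⁻¹ := by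
  set f := ofConsecRatios u
  have hf : ∀ i, 0 < f i := ofConsecRatios_pos hu
  have hfinv : ∀ i, 0 < (f i)⁻¹ := fun i => inv_pos.mpr (hf i)
  have hurev : ∀ i, 0 < (u ∘ Fin.rev) i := fun i => hu _
  have hrev : consecRatios (fun j => (f j.rev)⁻¹) =
      consecRatios (ofConsecRatios (u ∘ Fin.rev)) := by
    rw [consecRatios_inv_rev, consecRatios_ofConsecRatios hu, consecRatios_ofConsecRatios hurev]
  rw [divGeomMean_eq_of_consecRatios_eq hn hscale (fun j => hfinv j.rev)
    (ofConsecRatios_pos hurev) hrev]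
  exact (divGeomMean_comp_perm hsymm hfinv Fin.revPerm).trans (divGeomMean_inv hrecip hf)

end aggregator

theorem aggregator_classification {n : ℕ} (A : (Fin n → ℝ) → ℝ)
    (hpos : ∀ e : Fin n → ℝ, (∀ i, 0 < e i) → 0 < A e)
    (hsymm : ∀ e : Fin n → ℝ, (∀ i, 0 < e i) →
      ∀ σ : Equiv.Perm (Fin n), A (e ∘ σ) = A e)
    (hscale : ∀ e : Fin n → ℝ, (∀ i, 0 < e i) →
      ∀ l : ℝ, 0 < l → A (fun i => l * e i) = l * A e)
    (hrecip : ∀ e : Fin n → ℝ, (∀ i, 0 < e i) →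
      A (fun i => (e i)⁻¹) = (A e)⁻¹) :
    ∃ β : (Fin (n - 1) → ℝ) → ℝ,
      (∀ u : Fin (n - 1) → ℝ, (∀ i, 1 ≤ u i) → 0 < β u) ∧
      (∀ u : Fin (n - 1) → ℝ, (∀ i, 1 ≤ u i) →
        β u * β (u ∘ Fin.rev) = 1) ∧
      (∀ e : Fin n → ℝ, (∀ i, 0 < e i) →
        A e = (∏ i, e i) ^ ((n : ℝ)⁻¹) * β (ratios e)) := by
  have hn := ne_zero_of_homogeneous hpos hscale
  have hupos : ∀ u : Fin (n - 1) → ℝ, (∀ i, 1 ≤ u i) → ∀ i, 0 < u i :=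
    fun u hu i => one_pos.trans_le (hu i)
  refine ⟨fun u => divGeomMean A (ofConsecRatios u),
    fun u hu => divGeomMean_pos hpos (ofConsecRatios_pos (hupos u hu)), fun u hu => ?_,
    fun e he => ?_⟩
  · show _ * divGeomMean A (ofConsecRatios (u ∘ Fin.rev)) = 1
    rw [divGeomMean_ofConsecRatios_comp_rev hn hsymm hscale hrecip (hupos u hu)]
    exact mul_inv_cancel₀ (divGeomMean_pos hpos (ofConsecRatios_pos (hupos u hu))).ne'
  · have hroot : 0 < (∏ i, e i) ^ (n : ℝ)⁻¹ :=
      Real.rpow_pos_of_pos (prod_pos fun i _ => he i) _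
    show A e = _ * divGeomMean A (ofConsecRatios (ratios e))
    rw [divGeomMean_ofConsecRatios_ratios hn hsymm hscale he, divGeomMean,
      mul_div_cancel₀ _ hroot.ne']
end

section
/- If h : ℝⁿ → ℝ is symmetric under permutations of its arguments, invariant under translation by (λ,…,λ) for every λ ∈ ℝ, and odd (h(-x) = -h(x)), then for u₁,…,u_{n-1} > 0 the function β(u_{n-1},…,u₁) = exp(h(0, log u₁, log(u₁u₂), …, log(u₁⋯u_{n-1}))) satisfies β(u₁,…,u_{n-1})·β(u_{n-1},…,u₁) = 1. -/
/-!
Reversing the ratios `u` turns the partial sums of `log u` into their complements: the `i`-th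
coordinate of the reversed tuple is `S - x (rev i)`, where `x` is the original tuple and
`S = ∑ log uⱼ`. Translation invariance removes `S`, symmetry removes the reversal, and oddness
leaves `-h x`, so the two exponentials are reciprocal.
-/

/-- Given `w = (w₁, …, w_{n-1})`, the tuple `(0, log w_{n-1}, log (w_{n-1}w_{n-2}), …,
log (w_{n-1} ⋯ w₁))`, so that `betaOf h (u_{n-1}, …, u₁) =
exp (h (0, log u₁, log (u₁u₂), …, log (u₁ ⋯ u_{n-1})))`. -/
noncomputable def cumLog {n : ℕ} (w : Fin (n - 1) → ℝ) : Fin n → ℝ :=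
  fun i => ∑ j : Fin (n - 1), if (j : ℕ) < (i : ℕ) then Real.log (w (Fin.rev j)) else 0

/-- The candidate reciprocity function induced by a log-defect function `h`. -/
noncomputable def betaOf {n : ℕ} (h : (Fin n → ℝ) → ℝ) (w : Fin (n - 1) → ℝ) : ℝ :=
  Real.exp (h (cumLog w))

open Finset

theorem cumLog_comp_rev_add_cumLog {n : ℕ} (w : Fin (n - 1) → ℝ) (i : Fin n) :
    cumLog (w ∘ Fin.rev) i + cumLog w (Fin.rev i) = ∑ j, Real.log (w j) := by
  have hrev : cumLog w (Fin.rev i) =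
      ∑ j : Fin (n - 1), if ¬ (j : ℕ) < i then Real.log (w j) else 0 := by
    rw [cumLog, ← Equiv.sum_comp Fin.revPerm]
    refine sum_congr rfl fun j _ => ?_
    have hcond : ((Fin.rev j : ℕ) < (Fin.rev i : ℕ)) ↔ ¬ (j : ℕ) < i := by
      simp only [Fin.val_rev]
      omega
    simp only [Fin.revPerm_apply, hcond, Fin.rev_rev]
  rw [hrev, cumLog, ← sum_add_distrib]
  refine sum_congr rfl fun j _ => ?_
  by_cases hj : (j : ℕ) < i <;> simp [hj]

theorem apply_const_sub_comp_perm {n : ℕ} {h : (Fin n → ℝ) → ℝ}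
    (hsymm : ∀ (x : Fin n → ℝ) (σ : Equiv.Perm (Fin n)), h (x ∘ σ) = h x)
    (htrans : ∀ (x : Fin n → ℝ) (c : ℝ), h (fun i => x i + c) = h x)
    (hodd : ∀ x : Fin n → ℝ, h (fun i => -x i) = -h x)
    (x : Fin n → ℝ) (σ : Equiv.Perm (Fin n)) (c : ℝ) :
    h (fun i => c - x (σ i)) = -h x := by
  calc h (fun i => c - x (σ i)) = h (fun i => -(x ∘ σ) i + c) := by
        congr 1; funext i; simp only [Function.comp_apply]; ring
    _ = -h (x ∘ σ) := by rw [htrans, hodd]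
    _ = -h x := by rw [hsymm]

theorem induced_beta_is_reciprocity {n : ℕ} (h : (Fin n → ℝ) → ℝ)
    (hsymm : ∀ (x : Fin n → ℝ) (σ : Equiv.Perm (Fin n)), h (x ∘ σ) = h x)
    (htrans : ∀ (x : Fin n → ℝ) (c : ℝ), h (fun i => x i + c) = h x)
    (hodd : ∀ x : Fin n → ℝ, h (fun i => -x i) = -h x) :
    ∀ u : Fin (n - 1) → ℝ, (∀ i, 0 < u i) →
      betaOf h u * betaOf h (u ∘ Fin.rev) = 1 := by
  intro u _
  have hrev : cumLog (u ∘ Fin.rev) =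
      fun i => (∑ j, Real.log (u j)) - cumLog u (Fin.revPerm i) :=
    funext fun i => eq_sub_of_add_eq (cumLog_comp_rev_add_cumLog u i)
  rw [betaOf, betaOf, hrev, apply_const_sub_comp_perm hsymm htrans hodd, ← Real.exp_add,
    add_neg_cancel, Real.exp_zero]
end

section
/- Any aggregator A : (ℝ>0)ⁿ → ℝ>0 satisfying symmetry, scaling, and reciprocity agrees with the geometric mean on constant tuples and, more generally, on any tuple that equals the reversal of its rescaled reciprocal: if (e₁,…,eₙ) sorted increasingly satisfies e^(k)·e^(n+1-k) = c for all k and some constant c > 0, then A(e₁,…,eₙ) = √c = (e₁⋯eₙ)^(1/n). -/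
open Finset

theorem div_eq_comp_perm_of_mul_rev_eq {G₀ : Type*} [CommGroupWithZero G₀] {n : ℕ}
    {f : Fin n → G₀} (hf : ∀ i, f i ≠ 0) {τ : Equiv.Perm (Fin n)} {c : G₀}
    (h : ∀ k, f (τ k) * f (τ k.rev) = c) :
    (fun i => c / f i) = f ∘ (τ * Fin.revPerm * τ⁻¹ : Equiv.Perm (Fin n)) := by
  funext i
  have hi := h (τ⁻¹ i)
  rw [Equiv.Perm.coe_inv, Equiv.apply_symm_apply] at hi
  rw [← hi, mul_div_cancel_left₀ _ (hf i)]
  rfl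

theorem prod_sq_eq_pow_of_mul_rev_eq {M : Type*} [CommMonoid M] {n : ℕ} {g : Fin n → M} {c : M}
    (h : ∀ k, g k * g k.rev = c) :
    (∏ i, g i) ^ 2 = c ^ n := calc
  (∏ i, g i) ^ 2 = (∏ i, g i) * ∏ i : Fin n, g i.rev := by
    rw [sq, ← Equiv.prod_comp Fin.revPerm g]
    rfl
  _ = ∏ i, (g i * g i.rev) := prod_mul_distrib.symm
  _ = c ^ n := by simp [h]

theorem sqrt_eq_rpow_inv_of_sq_eq_pow {x c : ℝ} {n : ℕ} (hn : n ≠ 0) (hx : 0 ≤ x) (hc : 0 ≤ c)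
    (h : x ^ 2 = c ^ n) :
    Real.sqrt c = x ^ (n⁻¹ : ℝ) := by
  have hx' : x = Real.sqrt c ^ n := by
    refine (pow_left_inj₀ hx (by positivity) two_ne_zero).mp ?_
    rw [h, ← pow_mul, mul_comm, pow_mul, Real.sq_sqrt hc]
  rw [hx', Real.pow_rpow_inv_natCast (Real.sqrt_nonneg c) hn]

theorem aggregator_eq_sqrt_of_div_eq_comp_perm {n : ℕ} {A : (Fin n → ℝ) → ℝ}
    (hpos : ∀ e : Fin n → ℝ, (∀ i, 0 < e i) → 0 < A e)
    (hsymm : ∀ e : Fin n → ℝ, (∀ i, 0 < e i) →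
      ∀ σ : Equiv.Perm (Fin n), A (e ∘ σ) = A e)
    (hscale : ∀ e : Fin n → ℝ, (∀ i, 0 < e i) →
      ∀ l : ℝ, 0 < l → A (fun i => l * e i) = l * A e)
    (hrecip : ∀ e : Fin n → ℝ, (∀ i, 0 < e i) →
      A (fun i => (e i)⁻¹) = (A e)⁻¹)
    {e : Fin n → ℝ} (hepos : ∀ i, 0 < e i) {c : ℝ} (hc : 0 < c) {σ : Equiv.Perm (Fin n)}
    (hσ : (fun i => c / e i) = e ∘ σ) :
    A e = Real.sqrt c := by
  have hApos := hpos e hepos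
  have hA_div : A (fun i => c / e i) = c / A e := by
    simp_rw [div_eq_mul_inv]
    rw [hscale _ (fun i => inv_pos.mpr (hepos i)) c hc, hrecip e hepos]
  have hA_perm : A (fun i => c / e i) = A e := by
    rw [hσ, hsymm e hepos]
  rw [eq_comm, Real.sqrt_eq_iff_mul_self_eq_of_pos hApos]
  rwa [hA_perm, eq_div_iff hApos.ne'] at hA_div

theorem aggregator_on_self_reciprocal_tuples {n : ℕ} (hn : 0 < n)
    (A : (Fin n → ℝ) → ℝ)
    (hpos : ∀ e : Fin n → ℝ, (∀ i, 0 < e i) → 0 < A e)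
    (hsymm : ∀ e : Fin n → ℝ, (∀ i, 0 < e i) →
      ∀ σ : Equiv.Perm (Fin n), A (e ∘ σ) = A e)
    (hscale : ∀ e : Fin n → ℝ, (∀ i, 0 < e i) →
      ∀ l : ℝ, 0 < l → A (fun i => l * e i) = l * A e)
    (hrecip : ∀ e : Fin n → ℝ, (∀ i, 0 < e i) →
      A (fun i => (e i)⁻¹) = (A e)⁻¹)
    (e : Fin n → ℝ) (hepos : ∀ i, 0 < e i)
    (c : ℝ) (hc : 0 < c)
    (hself : ∀ k : Fin n, osort e k * osort e (Fin.rev k) = c) :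
    A e = Real.sqrt c ∧ Real.sqrt c = (∏ i, e i) ^ ((n : ℝ)⁻¹) := by
  have hperm := div_eq_comp_perm_of_mul_rev_eq (fun i => (hepos i).ne') hself
  have hprod : (∏ i, e i) ^ 2 = c ^ n := by
    rw [← Equiv.prod_comp (Tuple.sort e) e]
    exact prod_sq_eq_pow_of_mul_rev_eq hself
  exact ⟨aggregator_eq_sqrt_of_div_eq_comp_perm hpos hsymm hscale hrecip hepos hc hperm,
    sqrt_eq_rpow_inv_of_sq_eq_pow hn.ne' (prod_nonneg fun i _ => (hepos i).le) hc.le hprod⟩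
end
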